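/- (Basic blocks code the towers of the Pascal adic) For all n ≥ 1, all k with 0 ≤ k ≤ n, every x' ∈ X, and every i with 0 ≤ i < C(n,k): the 0-th coordinate of T^i(1^k 0^{n−k} x') equals 1 if and only if the i-th letter of the basic block B(n,k) is b. In other words, B(n,k) is the coding, by the first coordinate (1 ↦ b, 0 ↦ a), of the orbit segment of length C(n,k) starting at the minimal path 1^k 0^{n−k} x' through the vertex (n,k). -/

import Mathlib

/-- Concatenation of a finite word `w` with an infinite tail `x`. -/
def cat (w : List Bool) (x : ℕ → Bool) : ℕ → Bool :=
  fun i => if h : i < w.length then w.get ⟨i, h⟩ else x (i - w.length)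

/-- `T` satisfies the Pascal adic law: `T(0ⁿ1ᵐ10x') = 1ᵐ0ⁿ01x'`
(here `0 = false`, `1 = true`). -/
def PascalLaw (T : (ℕ → Bool) → (ℕ → Bool)) : Prop :=
  ∀ (n m : ℕ) (x' : ℕ → Bool),
    T (cat (List.replicate n false ++ List.replicate m true ++ [true, false]) x')
      = cat (List.replicate m true ++ List.replicate n false ++ [false, true]) x'

/-- The basic blocks of the Pascal triangle of words (`a = false`, `b = true`):
`B(n,0) = a`, `B(n,n) = b`, and `B(n,k) = B(n−1,k) ++ B(n−1,k−1)` for `0 < k < n`. -/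
def Bblk : ℕ → ℕ → List Bool
  | 0, _ => [true]
  | _ + 1, 0 => [false]
  | n + 1, k + 1 => if k + 1 = n + 1 then [true] else Bblk n (k + 1) ++ Bblk n k

/-!
Write the vertex `(n,k)` as `(j,l)` with `j = k` ones and `l = n - k` zeros. The tower over
`(j+1,l+1)` is the tower over `(j+1,l)` (paths ending in a `0` at level `n+1`) stacked below the
tower over `(j,l+1)` (paths ending in a `1`): running the tower over `(j+1,l)` from its minimal path
`1^(j+1) 0^l` reaches its maximal path `0^l 1^(j+1)`, and one more application of the Pascal law
turns `0^l 1^(j+1) 0` into the minimal path `1^j 0^(l+1) 1` of the second tower. This is exactly the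
recursion `B(n+1,k+1) = B(n,k+1) ++ B(n,k)`, so the coding, and the fact that each tower ends at its
maximal path, follow by induction on `j + l`.
-/

open Function List

lemma cat_append (u v : List Bool) (x : ℕ → Bool) : cat (u ++ v) x = cat u (cat v x) := by
  funext i
  simp only [cat, length_append, get_eq_getElem]
  by_cases hu : i < u.length
  · rw [dif_pos (by omega), dif_pos hu, getElem_append_left hu]
  · rw [dif_neg hu]
    by_cases hv : i < u.length + v.length
    · rw [dif_pos hv, dif_pos (by omega), getElem_append_right (by omega)]
    · rw [dif_neg hv, dif_neg (by omega), Nat.sub_sub]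

/-- The minimal path `1^j 0^l` through the vertex `(j + l, j)`. -/
def minPath (j l : ℕ) : List Bool := replicate j true ++ replicate l false

def maxPath (j l : ℕ) : List Bool := replicate l false ++ replicate j true

lemma cat_minPath_succ_right (j l : ℕ) (x : ℕ → Bool) :
    cat (minPath j (l + 1)) x = cat (minPath j l) (cat [false] x) := by
  rw [minPath, minPath, replicate_succ', ← append_assoc, cat_append]

lemma cat_maxPath_succ_left (j l : ℕ) (x : ℕ → Bool) :
    cat (maxPath (j + 1) l) x = cat (maxPath j l) (cat [true] x) := by
  rw [maxPath, maxPath, replicate_succ', ← append_assoc, cat_append]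

lemma PascalLaw.apply_cat_maxPath {T : (ℕ → Bool) → (ℕ → Bool)} (hT : PascalLaw T)
    (j l : ℕ) (x : ℕ → Bool) :
    T (cat (maxPath (j + 1) l) (cat [false] x)) = cat (minPath j (l + 1)) (cat [true] x) := by
  have hmax :
      maxPath (j + 1) l ++ [false] = replicate l false ++ replicate j true ++ [true, false] := by
    simp [maxPath, replicate_succ']
  have hmin :
      minPath j (l + 1) ++ [true] = replicate j true ++ replicate l false ++ [false, true] := by
    simp [minPath, replicate_succ']
  rw [← cat_append, ← cat_append, hmax, hT, hmin]

lemma Bblk_self (n : ℕ) : Bblk n n = [true] := by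
  cases n <;> simp [Bblk]

lemma Bblk_succ_zero (n : ℕ) : Bblk (n + 1) 0 = [false] := rfl

lemma Bblk_succ_succ (j l : ℕ) :
    Bblk (j + 1 + (l + 1)) (j + 1) = Bblk (j + 1 + l) (j + 1) ++ Bblk (j + (l + 1)) j := by
  rw [show j + 1 + (l + 1) = j + l + 1 + 1 by omega, Bblk, if_neg (by omega),
    show j + l + 1 = j + 1 + l by omega, show j + 1 + l = j + (l + 1) by omega]

lemma length_Bblk {n k : ℕ} (hk : k ≤ n) : (Bblk n k).length = n.choose k := by
  induction n generalizing k with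
  | zero => rw [Nat.le_zero.mp hk]; rfl
  | succ n ih =>
    rcases k with _ | k
    · rfl
    · by_cases hkn : k = n
      · subst hkn
        simp [Bblk_self]
      · rw [Bblk, if_neg (by omega), length_append, ih (by omega), ih (by omega),
          Nat.choose_succ_succ', add_comm]

lemma choose_succ_add_succ (j l : ℕ) :
    (j + 1 + (l + 1)).choose (j + 1) = (j + 1 + l).choose (j + 1) + (j + (l + 1)).choose j := by
  rw [show j + 1 + (l + 1) = j + (l + 1) + 1 by omega, Nat.choose_succ_succ', add_comm,
    show j + (l + 1) = j + 1 + l by omega]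

variable {T : (ℕ → Bool) → (ℕ → Bool)}

theorem PascalLaw.iterate_cat_minPath (hT : PascalLaw T) :
    ∀ (j l : ℕ) (x : ℕ → Bool),
      T^[(j + l).choose j - 1] (cat (minPath j l) x) = cat (maxPath j l) x
  | 0, l, x => by simp [minPath, maxPath]
  | j + 1, 0, x => by simp [minPath, maxPath]
  | j + 1, l + 1, x => by
    have ha := Nat.choose_pos (show j + 1 ≤ j + 1 + l by omega)
    have hb := Nat.choose_pos (show j ≤ j + (l + 1) by omega)
    have hsplit : ∀ a b : ℕ, 0 < a → 0 < b → a + b - 1 = (b - 1) + 1 + (a - 1) := by omega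
    rw [choose_succ_add_succ, hsplit _ _ ha hb, iterate_add_apply, iterate_add_apply,
      cat_minPath_succ_right, hT.iterate_cat_minPath (j + 1) l, iterate_one, hT.apply_cat_maxPath,
      hT.iterate_cat_minPath j (l + 1), cat_maxPath_succ_left]

lemma PascalLaw.iterate_cat_minPath_succ_succ (hT : PascalLaw T) (j l : ℕ) (x : ℕ → Bool) :
    T^[(j + 1 + l).choose (j + 1)] (cat (minPath (j + 1) (l + 1)) x)
      = cat (minPath j (l + 1)) (cat [true] x) := by
  have ha := Nat.choose_pos (show j + 1 ≤ j + 1 + l by omega)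
  rw [show (j + 1 + l).choose (j + 1) = 1 + ((j + 1 + l).choose (j + 1) - 1) by omega,
    iterate_add_apply, cat_minPath_succ_right, hT.iterate_cat_minPath, iterate_one,
    hT.apply_cat_maxPath]

theorem PascalLaw.iterate_cat_minPath_apply_zero (hT : PascalLaw T) :
    ∀ (j l : ℕ), 0 < j + l → ∀ (x : ℕ → Bool) (i : ℕ), i < (j + l).choose j →
      (T^[i] (cat (minPath j l) x)) 0 = (Bblk (j + l) j).getD i false
  | 0, 0, h, _, _, _ => (lt_irrefl 0 h).elim
  | 0, l + 1, _, x, i, hi => by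
    obtain rfl : i = 0 := by simpa using hi
    simp [minPath, cat, Bblk_succ_zero]
  | j + 1, 0, _, x, i, hi => by
    obtain rfl : i = 0 := by simpa using hi
    simp [minPath, cat, Bblk_self]
  | j + 1, l + 1, _, x, i, hi => by
    have hlen := length_Bblk (show j + 1 ≤ j + 1 + l by omega)
    rw [choose_succ_add_succ] at hi
    rw [Bblk_succ_succ]
    rcases lt_or_ge i ((j + 1 + l).choose (j + 1)) with hlt | hge
    · rw [cat_minPath_succ_right, hT.iterate_cat_minPath_apply_zero (j + 1) l (by omega) _ i hlt,
        getD_append _ _ _ _ (by omega)]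
    · obtain ⟨i, rfl⟩ := Nat.exists_eq_add_of_le' hge
      rw [iterate_add_apply, hT.iterate_cat_minPath_succ_succ,
        hT.iterate_cat_minPath_apply_zero j (l + 1) (by omega) _ i (by omega),
        getD_append_right _ _ _ _ (by omega), hlen, Nat.add_sub_cancel]

/-- The basic block `B(n,k)` is the coding, by the first coordinate
(`1 ↦ b = true`, `0 ↦ a = false`), of the orbit segment of length `C(n,k)`
starting at the minimal path `1^k 0^{n-k} x'` through the vertex `(n,k)`. -/
theorem basic_block_codes_tower (T : (ℕ → Bool) → (ℕ → Bool)) (hT : PascalLaw T)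
    (n k : ℕ) (hn : 1 ≤ n) (hk : k ≤ n) (x' : ℕ → Bool)
    (i : ℕ) (hi : i < Nat.choose n k) :
    (T^[i] (cat (List.replicate k true ++ List.replicate (n - k) false) x')) 0
      = (Bblk n k).getD i false := by
  obtain ⟨l, rfl⟩ : ∃ l, n = k + l := ⟨n - k, by omega⟩
  rw [Nat.add_sub_cancel_left]
  exact hT.iterate_cat_minPath_apply_zero k l hn x' i hi
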